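/- Let φ be a setfunction on a set algebra (J, 𝓑), and let k ≥ 1 and b ≥ 2^k. Then T_k(φ) = T_k(Q_b(φ)): every k-crop of φ equals a k-crop of some b-quotient of φ. -/

import Mathlib

/-!
The sets `A₁, …, A_k` cut `J` into at most `2^k` atoms `⋂ᵢ A_i^{±}`, indexed by `S ⊆ [k]`; they lie
in the algebra and partition `J`. As `b ≥ 2^k`, they can be placed injectively into `b` slots, the
remaining slots being empty, which gives a `b`-quotient `ψ`. Each `A_i` is the union of the atoms
with `i ∈ S`, so `φ/A` is the crop of `ψ` along `P_i = {S | i ∈ S}`. Conversely, a crop of a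
quotient along `P` is the crop of `φ` along the finite unions `⋃_{m ∈ P_i} D_m`, which lie in the
algebra.
-/

/-- The `k`-crop of a setfunction `φ` along a tuple `A` of sets:
`(φ/A)(I) = φ(⋃_{i∈I} A_i)`. -/
def cropFn {J : Type*} (φ : Set J → ℝ) {k : ℕ} (A : Fin k → Set J) :
    Finset (Fin k) → ℝ :=
  fun I => φ (⋃ i ∈ I, A i)

/-- The set `T_k(φ)` of `k`-crops of `φ`, over tuples of sets from the family `B`. -/
def crops {J : Type*} (B : Set (Set J)) (φ : Set J → ℝ) (k : ℕ) :
    Set (Finset (Fin k) → ℝ) :=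
  {ψ | ∃ A : Fin k → Set J, (∀ i, A i ∈ B) ∧ ψ = cropFn φ A}

/-- The set `Q_b(φ)` of `b`-quotients of `φ`: crops along partitions of `J` into `b`
(possibly empty) sets from `B`. -/
def quotients {J : Type*} (B : Set (Set J)) (φ : Set J → ℝ) (b : ℕ) :
    Set (Finset (Fin b) → ℝ) :=
  {ψ | ∃ A : Fin b → Set J, (∀ i, A i ∈ B) ∧ Pairwise (Function.onFun Disjoint A) ∧
      (⋃ i, A i) = Set.univ ∧ ψ = cropFn φ A}

/-- The set `T_k(ψ)` of `k`-crops of a setfunction `ψ : 2^[b] → ℝ`. -/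
def cropsFin {b : ℕ} (ψ : Finset (Fin b) → ℝ) (k : ℕ) :
    Set (Finset (Fin k) → ℝ) :=
  {σ | ∃ P : Fin k → Finset (Fin b), σ = fun I => ψ (I.biUnion P)}

open Function MeasureTheory

theorem cropFn_biUnion {J : Type*} (φ : Set J → ℝ) {k b : ℕ} (D : Fin b → Set J)
    (P : Fin k → Finset (Fin b)) :
    cropFn φ (fun i => ⋃ m ∈ P i, D m) = fun I => cropFn φ D (I.biUnion P) := by
  funext I
  simp only [cropFn, Finset.set_biUnion_biUnion]

section Atoms

variable {ι J : Type*} [DecidableEq ι]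

def atom (A : ι → Set J) (S : Finset ι) : Set J :=
  ⋂ i, if i ∈ S then A i else (A i)ᶜ

theorem mem_atom_iff {A : ι → Set J} {S : Finset ι} {x : J} :
    x ∈ atom A S ↔ ∀ i, (x ∈ A i ↔ i ∈ S) := by
  simp only [atom, Set.mem_iInter]
  refine forall_congr' fun i => ?_
  by_cases hi : i ∈ S <;> simp [hi]

theorem pairwise_disjoint_atom (A : ι → Set J) : Pairwise (Disjoint on atom A) := by
  intro S T hST
  refine Set.disjoint_left.2 fun x hxS hxT => hST ?_
  ext i
  rw [← mem_atom_iff.1 hxS i, mem_atom_iff.1 hxT i]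

variable [Fintype ι]

theorem mem_atom_filter_mem (A : ι → Set J) (x : J) [DecidablePred (x ∈ A ·)] :
    x ∈ atom A (Finset.univ.filter (x ∈ A ·)) := by
  simp [mem_atom_iff]

theorem iUnion_atom (A : ι → Set J) : ⋃ S, atom A S = Set.univ := by
  classical
  exact Set.eq_univ_of_forall fun x => Set.mem_iUnion.2 ⟨_, mem_atom_filter_mem A x⟩

theorem biUnion_atom_filter_mem (A : ι → Set J) (i : ι) :
    ⋃ S ∈ Finset.univ.filter (i ∈ ·), atom A S = A i := by
  classical
  ext x
  simp only [Set.mem_iUnion, Finset.mem_filter, Finset.mem_univ, true_and, exists_prop]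
  constructor
  · rintro ⟨S, hiS, hx⟩
    exact (mem_atom_iff.1 hx i).2 hiS
  · intro hx
    exact ⟨_, by simpa using hx, mem_atom_filter_mem A x⟩

theorem atom_mem {B : Set (Set J)} (hB : IsSetAlgebra B) {A : ι → Set J} (hA : ∀ i, A i ∈ B)
    (S : Finset ι) : atom A S ∈ B := by
  have h := hB.biInter_mem (s := fun i => if i ∈ S then A i else (A i)ᶜ) Finset.univ
    fun i _ => by split_ifs; exacts [hA i, hB.compl_mem (hA i)]
  simpa only [atom, Finset.mem_univ, Set.iInter_true] using h

end Atoms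

theorem crops_subset_iUnion_cropsFin {J : Type*} {B : Set (Set J)} (hB : IsSetAlgebra B)
    (φ : Set J → ℝ) {k b : ℕ} (hb : 2 ^ k ≤ b) :
    crops B φ k ⊆ ⋃ ψ ∈ quotients B φ b, cropsFin ψ k := by
  rintro _ ⟨A, hA, rfl⟩
  obtain ⟨e⟩ : Nonempty (Finset (Fin k) ↪ Fin b) :=
    Embedding.nonempty_of_card_le (by simpa using hb)
  set D := extend e (atom A) ⊥
  have hD (S) : D (e S) = atom A S := e.injective.extend_apply _ _ S
  refine Set.mem_biUnion (x := cropFn φ D) ⟨D, fun m => ?_, ?_, ?_, rfl⟩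
    ⟨fun i => (Finset.univ.filter (i ∈ ·)).image e, ?_⟩
  · by_cases hm : ∃ S, e S = m
    · obtain ⟨S, rfl⟩ := hm
      exact hD S ▸ atom_mem hB hA S
    · rw [show D m = ∅ from extend_apply' _ _ _ hm]
      exact hB.empty_mem
  · exact (pairwise_disjoint_atom A).disjoint_extend_bot (e.injective.factorsThrough _)
  · exact (iSup_extend_bot e.injective _).trans (iUnion_atom A)
  · rw [← cropFn_biUnion]
    simp only [Finset.set_biUnion_finset_image, hD, biUnion_atom_filter_mem]

theorem iUnion_cropsFin_subset_crops {J : Type*} {B : Set (Set J)} (hB : IsSetRing B)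
    (φ : Set J → ℝ) (k b : ℕ) :
    ⋃ ψ ∈ quotients B φ b, cropsFin ψ k ⊆ crops B φ k := by
  simp only [Set.iUnion_subset_iff]
  rintro _ ⟨D, hD, -, -, rfl⟩ _ ⟨P, rfl⟩
  exact ⟨_, fun i => hB.biUnion_mem (P i) fun m _ => hD m, (cropFn_biUnion φ D P).symm⟩

theorem stmt3_general {J : Type*} (B : Set (Set J)) (φ : Set J → ℝ)
    (hempty : ∅ ∈ B)
    (hunion : ∀ X Y, X ∈ B → Y ∈ B → X ∪ Y ∈ B)
    (hcompl : ∀ X, X ∈ B → Xᶜ ∈ B)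
    (k b : ℕ) (hb : 2 ^ k ≤ b) :
    crops B φ k = ⋃ ψ ∈ quotients B φ b, cropsFin ψ k := by
  have hB : IsSetAlgebra B := ⟨hempty, fun _ => hcompl _, fun _ _ => hunion _ _⟩
  exact (crops_subset_iUnion_cropsFin hB φ hb).antisymm (iUnion_cropsFin_subset_crops hB.isSetRing φ k b)

/-- For a setfunction `φ` on a set algebra `(J, B)`, `k ≥ 1` and
`b ≥ 2^k`, we have `T_k(φ) = T_k(Q_b(φ))`. -/
theorem stmt3 {J : Type*} (B : Set (Set J)) (φ : Set J → ℝ)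
    (hempty : ∅ ∈ B) (huniv : Set.univ ∈ B)
    (hunion : ∀ X Y, X ∈ B → Y ∈ B → X ∪ Y ∈ B)
    (hinter : ∀ X Y, X ∈ B → Y ∈ B → X ∩ Y ∈ B)
    (hcompl : ∀ X, X ∈ B → Xᶜ ∈ B)
    (hφ : φ ∅ = 0)
    (k b : ℕ) (hk : 1 ≤ k) (hb : 2 ^ k ≤ b) :
    crops B φ k = ⋃ ψ ∈ quotients B φ b, cropsFin ψ k :=
  stmt3_general B φ hempty hunion hcompl k b hb
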